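/- Let τ belong to class 𝒯. Then there exists n₀ ∈ ℕ such that for all n ≥ n₀, the infimum of the derivative of τ^n over all branch intervals of 𝒫^{(n)} satisfies inf (τ^n)' ≥ 2. -/

import Mathlib

/-!
By convexity and `τ(aᵢ⁺) = 0`, every branch satisfies `τ'(x) ≥ τ(x) / (x - aᵢ) ≥ τ(x) / x`.
Since `∑ 1 / τ'(aᵢ) < ∞`, only finitely many branches are slow (`τ'(aᵢ) < Λ` for some `Λ > 1`),
and none of them starts at `0`: either `0` is a limit of left endpoints, or the branch at `0`
has `τ'(0) > 1` and we take `Λ = τ'(0)`. So the slow branches lie in `[ε, 1]`, where the chord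
bound gains the factor `(1 - ε)⁻¹`. Interpolating geometrically between the lower bounds of `τ'`
gives `τ'(x) ≥ ν (τ(x) / x)^(1-σ)` with `ν > 1`, which telescopes along an orbit to
`(τⁿ)'(x) ≥ νⁿ (τⁿx / x)^(1-σ)`. This is weak only when `τⁿx` is small, but every step taken
below `ε` expands by at least `Λ ≥ ν`, so splitting the orbit at its last visit to `[ε, 1]` gives
`(τⁿ)' ≥ C νⁿ` uniformly.
-/

open Set Filter MeasureTheory Topology

structure PCT where
  τ : ℝ → ℝ
  a : ℕ → ℝ
  b : ℕ → ℝ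
  da : ℕ → ℝ
  maps_to : Set.MapsTo τ (Set.Icc 0 1) (Set.Icc 0 1)
  lt : ∀ i, a i < b i
  sub : ∀ i, Set.Ioo (a i) (b i) ⊆ Set.Icc (0:ℝ) 1
  disj : Pairwise (Function.onFun Disjoint fun i => Set.Ioo (a i) (b i))
  null : volume (Set.Icc (0:ℝ) 1 \ ⋃ i, Set.Ioo (a i) (b i)) = 0
  mono : ∀ i, StrictMonoOn τ (Set.Ioo (a i) (b i))
  conv : ∀ i, ConvexOn ℝ (Set.Ioo (a i) (b i)) τ
  diff : ∀ i, ∀ x ∈ Set.Ioo (a i) (b i), DifferentiableAt ℝ τ x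
  lim_zero : ∀ i, Filter.Tendsto τ (nhdsWithin (a i) (Set.Ioi (a i))) (nhds 0)
  deriv_lim : ∀ i, Filter.Tendsto (deriv τ) (nhdsWithin (a i) (Set.Ioi (a i))) (nhds (da i))
  da_pos : ∀ i, 0 < da i
  sum_inv : Summable (fun i => 1 / da i)
  expand : (¬ AccPt (0:ℝ) (Filter.principal (Set.range a))) → ∃ i, a i = 0 ∧ 1 < da i

/-- The interval `(c,d)` follows a single sequence of branches under the first `n`
iterates of `τ`. -/
def IsBranchSeq (T : PCT) (n : ℕ) (c d : ℝ) : Prop :=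
  c < d ∧ ∀ k < n, ∃ i, T.τ^[k] '' Set.Ioo c d ⊆ Set.Ioo (T.a i) (T.b i)

/-- `(c,d)` is a maximal open interval on which `τ^n` is a single monotone branch,
i.e. an element of the partition `𝒫⁽ⁿ⁾`. -/
def IsBranchInterval (T : PCT) (n : ℕ) (c d : ℝ) : Prop :=
  IsBranchSeq T n c d ∧
    ∀ c' d', c' ≤ c → d ≤ d' → IsBranchSeq T n c' d' → c' = c ∧ d' = d

section Sequences

variable {y g : ℕ → ℝ} {ε ρ γ ν : ℝ}

theorem pow_mul_rpow_div_le_prod (hν : 0 ≤ ν) :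
    ∀ n : ℕ, (∀ k ≤ n, 0 < y k) → (∀ k < n, ν * (y (k + 1) / y k) ^ γ ≤ g k) →
      ν ^ n * (y n / y 0) ^ γ ≤ ∏ k ∈ Finset.range n, g k
  | 0, hy, _ => by simp [div_self (hy 0 le_rfl).ne']
  | n + 1, hy, hg => by
    have ih := pow_mul_rpow_div_le_prod hν n (fun k hk => hy k (by omega))
      (fun k hk => hg k (by omega))
    have hy0 := hy 0 (by omega)
    have hyn := hy n (by omega)
    have hyn' := hy (n + 1) le_rfl
    have hsplit : (y (n + 1) / y 0) ^ γ = (y n / y 0) ^ γ * (y (n + 1) / y n) ^ γ := by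
      rw [← Real.mul_rpow (by positivity) (by positivity)]
      field_simp
    rw [Finset.prod_range_succ, hsplit]
    calc ν ^ (n + 1) * ((y n / y 0) ^ γ * (y (n + 1) / y n) ^ γ)
        = (ν ^ n * (y n / y 0) ^ γ) * (ν * (y (n + 1) / y n) ^ γ) := by ring
      _ ≤ (∏ k ∈ Finset.range n, g k) * g n :=
        mul_le_mul ih (hg n (by omega)) (by positivity) ((by positivity : (0 : ℝ) ≤ _).trans ih)

theorem min_mul_pow_le_prod (hε : 0 < ε) (hρ : 0 ≤ ρ) (hγ : 0 ≤ γ) (hν : 0 < ν) :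
    ∀ n : ℕ, (∀ k < n, y k ∈ Ioc 0 1) → (∀ k < n, ρ ≤ g k) → (∀ k < n, y k < ε → ν ≤ g k) →
      (∀ k < n, ν * (y (k + 1) / y k) ^ γ ≤ g k) →
      min 1 (ε ^ γ * ρ / ν) * ν ^ n ≤ ∏ k ∈ Finset.range n, g k
  | 0, _, _, _, _ => by simp
  | n + 1, hy, hρg, hsmall, hstep => by
    have ih := min_mul_pow_le_prod hε hρ hγ hν n (fun k hk => hy k (by omega))
      (fun k hk => hρg k (by omega)) (fun k hk => hsmall k (by omega))
      (fun k hk => hstep k (by omega))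
    have hprod : 0 ≤ ∏ k ∈ Finset.range n, g k := (by positivity : (0 : ℝ) ≤ _).trans ih
    rw [Finset.prod_range_succ]
    rcases lt_or_ge (y n) ε with hyε | hεy
    · calc min 1 (ε ^ γ * ρ / ν) * ν ^ (n + 1) = min 1 (ε ^ γ * ρ / ν) * ν ^ n * ν := by ring
        _ ≤ (∏ k ∈ Finset.range n, g k) * g n :=
          mul_le_mul ih (hsmall n (by omega) hyε) hν.le hprod
    · have hy0 := hy 0 (by omega)
      have hyn := hy n (by omega)
      have hεle : ε ≤ y n / y 0 := by
        rw [le_div_iff₀ hy0.1]; nlinarith [hy0.2, hyn.1]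
      have htel := pow_mul_rpow_div_le_prod (γ := γ) hν.le n
        (fun k hk => (hy k (by omega)).1) (fun k hk => hstep k (by omega))
      calc min 1 (ε ^ γ * ρ / ν) * ν ^ (n + 1) ≤ ε ^ γ * ρ / ν * ν ^ (n + 1) :=
            mul_le_mul_of_nonneg_right (min_le_right _ _) (by positivity)
        _ = ν ^ n * ε ^ γ * ρ := by field_simp; ring
        _ ≤ (∏ k ∈ Finset.range n, g k) * g n := by
          refine mul_le_mul ?_ (hρg n (by omega)) hρ hprod
          calc ν ^ n * ε ^ γ ≤ ν ^ n * (y n / y 0) ^ γ := by gcongr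
            _ ≤ _ := htel

end Sequences

theorem Real.rpow_mul_rpow_le_of_le_of_le {p q r σ : ℝ} (hp : 0 ≤ p) (hq : 0 ≤ q)
    (hσ₀ : 0 ≤ σ) (hσ₁ : σ ≤ 1) (hpr : p ≤ r) (hqr : q ≤ r) : p ^ (1 - σ) * q ^ σ ≤ r :=
  calc p ^ (1 - σ) * q ^ σ ≤ (1 - σ) * p + σ * q :=
        Real.geom_mean_le_arith_mean2_weighted (by linarith) hσ₀ hp hq (by ring)
    _ ≤ r := by nlinarith

theorem exists_one_lt_rpow_mul_rpow {β ρ : ℝ} (hβ : 1 < β) (hρ : 0 < ρ) :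
    ∃ σ : ℝ, 0 < σ ∧ σ ≤ 1 ∧ 1 < β ^ (1 - σ) * ρ ^ σ := by
  have hcont : ContinuousAt (fun σ : ℝ => β ^ (1 - σ) * ρ ^ σ) 0 := by
    have := Real.continuousAt_const_rpow (a := ρ) (b := 0) hρ.ne'
    fun_prop (disch := positivity)
  have hlim : ∀ᶠ σ in 𝓝[>] (0 : ℝ), 1 < β ^ (1 - σ) * ρ ^ σ :=
    (hcont.eventually (lt_mem_nhds (by simpa using hβ))).filter_mono nhdsWithin_le_nhds
  obtain ⟨σ, hσ, hσ₀, hσ₁⟩ := (hlim.and (Ioo_mem_nhdsGT one_pos)).exists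
  exact ⟨σ, hσ₀, hσ₁.le, hσ⟩

namespace PCT

variable (T : PCT) {i : ℕ} {x : ℝ}

theorem Icc_subset (i : ℕ) : Icc (T.a i) (T.b i) ⊆ Icc 0 1 := by
  rw [← closure_Ioo (T.lt i).ne]
  exact closure_minimal (T.sub i) isClosed_Icc

theorem a_nonneg (i : ℕ) : 0 ≤ T.a i :=
  (T.Icc_subset i ⟨le_rfl, (T.lt i).le⟩).1

theorem pos_of_mem (hx : x ∈ Ioo (T.a i) (T.b i)) : 0 < x :=
  (T.a_nonneg i).trans_lt hx.1

theorem le_one_of_mem (hx : x ∈ Ioo (T.a i) (T.b i)) : x ≤ 1 :=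
  (T.sub i hx).2

theorem tau_nonneg_of_mem (hx : x ∈ Ioo (T.a i) (T.b i)) : 0 ≤ T.τ x := by
  refine le_of_tendsto (T.lim_zero i) ?_
  filter_upwards [Ioo_mem_nhdsGT hx.1] with z hz
  exact (T.mono i ⟨hz.1, hz.2.trans hx.2⟩ hx hz.2).le

theorem da_le_deriv (hx : x ∈ Ioo (T.a i) (T.b i)) : T.da i ≤ deriv T.τ x := by
  refine le_of_tendsto (T.deriv_lim i) ?_
  filter_upwards [Ioo_mem_nhdsGT hx.1] with z hz
  exact (T.conv i).monotoneOn_deriv (T.diff i) ⟨hz.1, hz.2.trans hx.2⟩ hx hz.2.le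

theorem div_sub_a_le_deriv (hx : x ∈ Ioo (T.a i) (T.b i)) :
    T.τ x / (x - T.a i) ≤ deriv T.τ x := by
  have hxa : 0 < x - T.a i := sub_pos.mpr hx.1
  have hchord : Tendsto (fun z => (T.τ x - T.τ z) / (x - z)) (𝓝[>] (T.a i))
      (𝓝 ((T.τ x - 0) / (x - T.a i))) :=
    (tendsto_const_nhds.sub (T.lim_zero i)).div
      (tendsto_const_nhds.sub (tendsto_id.mono_left nhdsWithin_le_nhds)) hxa.ne'
  rw [sub_zero] at hchord
  refine le_of_tendsto hchord ?_
  filter_upwards [Ioo_mem_nhdsGT hx.1] with z hz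
  have := (T.conv i).slope_le_deriv ⟨hz.1, hz.2.trans hx.2⟩ hx hz.2 (T.diff i x hx)
  rwa [slope_def_field] at this

theorem div_le_deriv (hx : x ∈ Ioo (T.a i) (T.b i)) : T.τ x / x ≤ deriv T.τ x :=
  calc T.τ x / x ≤ T.τ x / (x - T.a i) := by
        gcongr
        · exact T.tau_nonneg_of_mem hx
        · exact sub_pos.mpr hx.1
        · exact sub_le_self _ (T.a_nonneg i)
    _ ≤ deriv T.τ x := T.div_sub_a_le_deriv hx

theorem inv_one_sub_mul_div_le_deriv {ε : ℝ} (hεa : ε ≤ T.a i)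
    (hx : x ∈ Ioo (T.a i) (T.b i)) : (1 - ε)⁻¹ * (T.τ x / x) ≤ deriv T.τ x :=
  calc (1 - ε)⁻¹ * (T.τ x / x) = T.τ x / ((1 - ε) * x) := by field_simp
    _ ≤ T.τ x / (x - T.a i) := by
        have := T.le_one_of_mem hx
        gcongr
        · exact T.tau_nonneg_of_mem hx
        · exact sub_pos.mpr hx.1
        · nlinarith [T.a_nonneg i, T.pos_of_mem hx]
    _ ≤ deriv T.τ x := T.div_sub_a_le_deriv hx

theorem min_b_le_max_a {i j : ℕ} (h : i ≠ j) : min (T.b i) (T.b j) ≤ max (T.a i) (T.a j) :=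
  Ioo_disjoint_Ioo.mp (T.disj h)

theorem tendsto_da : Tendsto T.da cofinite atTop := by
  have h : Tendsto (fun i => 1 / T.da i) cofinite (𝓝[>] 0) :=
    tendsto_nhdsWithin_iff.mpr
      ⟨T.sum_inv.tendsto_cofinite_zero, .of_forall fun i => one_div_pos.mpr (T.da_pos i)⟩
  simpa [Pi.inv_def] using h.inv_tendsto_nhdsGT_zero

theorem exists_pos_le_da : ∃ ρ, 0 < ρ ∧ ∀ i, ρ ≤ T.da i :=
  let ⟨i₀, h⟩ := T.tendsto_da.exists_forall_le
  ⟨T.da i₀, T.da_pos i₀, h⟩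

theorem exists_one_lt_forall_da_lt_imp_a_pos : ∃ Λ, 1 < Λ ∧ ∀ i, T.da i < Λ → 0 < T.a i := by
  by_cases hacc : AccPt (0 : ℝ) (𝓟 (range T.a))
  · refine ⟨2, one_lt_two, fun i _ => (T.a_nonneg i).lt_of_ne' fun hi => ?_⟩
    obtain ⟨_, ⟨hj, j, rfl⟩, hj0⟩ :=
      accPt_iff_nhds.mp hacc (Iio (T.b i)) (Iio_mem_nhds (hi ▸ T.lt i))
    have hij : i ≠ j := by rintro rfl; exact hj0 hi
    have := T.min_b_le_max_a hij
    simp only [hi, max_eq_right (T.a_nonneg j), min_le_iff] at this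
    rcases this with h | h
    · exact h.not_gt hj
    · exact h.not_gt (T.lt j)
  · obtain ⟨i₀, hi₀, hda⟩ := T.expand hacc
    refine ⟨T.da i₀, hda, fun i hi => (T.a_nonneg i).lt_of_ne' fun hi0 => ?_⟩
    have hii₀ : i ≠ i₀ := by rintro rfl; exact lt_irrefl _ hi
    have := T.min_b_le_max_a hii₀
    rw [hi0, hi₀, max_self] at this
    exact (lt_min (hi0 ▸ T.lt i) (hi₀ ▸ T.lt i₀)).not_ge this

theorem exists_forall_da_lt_imp_le_a :
    ∃ ε Λ, 0 < ε ∧ ε < 1 ∧ 1 < Λ ∧ ∀ i, T.da i < Λ → ε ≤ T.a i := by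
  obtain ⟨Λ, hΛ, hpos⟩ := T.exists_one_lt_forall_da_lt_imp_a_pos
  have hfin : {i | T.da i < Λ}.Finite := by
    simpa using eventually_cofinite.mp (T.tendsto_da.eventually_ge_atTop Λ)
  have hε : ∀ᶠ ε in 𝓝[>] (0 : ℝ), ∀ i ∈ {i | T.da i < Λ}, ε ≤ T.a i :=
    (eventually_all_finite hfin).mpr fun i hi =>
      (eventually_le_nhds (hpos i hi)).filter_mono nhdsWithin_le_nhds
  obtain ⟨ε, hε, hε₀, hε₁⟩ := (hε.and (Ioo_mem_nhdsGT one_pos)).exists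
  exact ⟨ε, Λ, hε₀, hε₁, hΛ, hε⟩

section Thresholds

variable {ε Λ : ℝ} (hslow : ∀ i, T.da i < Λ → ε ≤ T.a i)
include hslow

theorem le_deriv_of_lt (hx : x ∈ Ioo (T.a i) (T.b i)) (hxε : x < ε) : Λ ≤ deriv T.τ x := by
  refine le_trans ?_ (T.da_le_deriv hx)
  by_contra! h
  exact (hslow i h).not_gt (hx.1.trans hxε)

theorem min_mul_rpow_le_deriv {ρ σ : ℝ} (hΛ : 0 ≤ Λ) (hρ : 0 ≤ ρ) (hρda : ∀ i, ρ ≤ T.da i)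
    (hσ₀ : 0 ≤ σ) (hσ₁ : σ ≤ 1) (hx : x ∈ Ioo (T.a i) (T.b i)) :
    min (Λ ^ σ) ((1 - ε)⁻¹ ^ (1 - σ) * ρ ^ σ) * (T.τ x / x) ^ (1 - σ) ≤ deriv T.τ x := by
  have hR : 0 ≤ T.τ x / x := div_nonneg (T.tau_nonneg_of_mem hx) (T.pos_of_mem hx).le
  rcases le_or_gt Λ (T.da i) with hfast | hslow_i
  · calc min (Λ ^ σ) ((1 - ε)⁻¹ ^ (1 - σ) * ρ ^ σ) * (T.τ x / x) ^ (1 - σ)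
        ≤ (T.τ x / x) ^ (1 - σ) * Λ ^ σ := by
          rw [mul_comm]; gcongr; exact min_le_left _ _
      _ ≤ deriv T.τ x := Real.rpow_mul_rpow_le_of_le_of_le hR hΛ hσ₀ hσ₁
          (T.div_le_deriv hx) (hfast.trans (T.da_le_deriv hx))
  · have hε : ε < 1 := (hslow i hslow_i).trans_lt (hx.1.trans_le (T.le_one_of_mem hx))
    have hβ : 0 ≤ (1 - ε)⁻¹ := inv_nonneg.mpr (sub_nonneg.mpr hε.le)
    calc min (Λ ^ σ) ((1 - ε)⁻¹ ^ (1 - σ) * ρ ^ σ) * (T.τ x / x) ^ (1 - σ)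
        ≤ (1 - ε)⁻¹ ^ (1 - σ) * ρ ^ σ * (T.τ x / x) ^ (1 - σ) := by
          gcongr; exact min_le_right _ _
      _ = ((1 - ε)⁻¹ * (T.τ x / x)) ^ (1 - σ) * ρ ^ σ := by
          rw [Real.mul_rpow hβ hR]; ring
      _ ≤ deriv T.τ x := Real.rpow_mul_rpow_le_of_le_of_le (mul_nonneg hβ hR) hρ hσ₀ hσ₁
          (T.inv_one_sub_mul_div_le_deriv (hslow i hslow_i) hx)
          ((hρda i).trans (T.da_le_deriv hx))

end Thresholds

theorem hasDerivAt_iterate :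
    ∀ n : ℕ, (∀ k < n, ∃ i, T.τ^[k] x ∈ Ioo (T.a i) (T.b i)) →
      HasDerivAt T.τ^[n] (∏ k ∈ Finset.range n, deriv T.τ (T.τ^[k] x)) x
  | 0, _ => by simpa using hasDerivAt_id x
  | n + 1, h => by
    obtain ⟨i, hi⟩ := h n n.lt_succ_self
    rw [Finset.prod_range_succ, mul_comm, Function.iterate_succ']
    exact (T.diff i _ hi).hasDerivAt.comp x
      (hasDerivAt_iterate n fun k hk => h k (hk.trans n.lt_succ_self))

theorem exists_const_mul_pow_le_deriv_iterate : ∃ C ν : ℝ, 0 < C ∧ 1 < ν ∧ ∀ (n : ℕ) (x : ℝ),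
    (∀ k < n, ∃ i, T.τ^[k] x ∈ Ioo (T.a i) (T.b i)) → C * ν ^ n ≤ deriv T.τ^[n] x := by
  obtain ⟨ε, Λ, hε₀, hε₁, hΛ, hslow⟩ := T.exists_forall_da_lt_imp_le_a
  obtain ⟨ρ, hρ, hρda⟩ := T.exists_pos_le_da
  obtain ⟨σ, hσ₀, hσ₁, hσ⟩ :=
    exists_one_lt_rpow_mul_rpow (one_lt_inv₀ (sub_pos.mpr hε₁) |>.mpr (by linarith)) hρ
  set ν := min (Λ ^ σ) ((1 - ε)⁻¹ ^ (1 - σ) * ρ ^ σ)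
  have hν : 1 < ν := lt_min (Real.one_lt_rpow hΛ hσ₀) hσ
  have hνΛ : ν ≤ Λ := (min_le_left _ _).trans <|
    (Real.rpow_le_rpow_of_exponent_le hΛ.le hσ₁).trans_eq (Real.rpow_one Λ)
  refine ⟨min 1 (ε ^ (1 - σ) * ρ / ν), ν, by positivity, hν, fun n x hx => ?_⟩
  rw [(T.hasDerivAt_iterate n hx).deriv]
  refine min_mul_pow_le_prod (y := fun k => T.τ^[k] x) hε₀ hρ.le (sub_nonneg.mpr hσ₁)
    (zero_lt_one.trans hν) n ?_ ?_ ?_ ?_ <;> intro k hk <;> obtain ⟨i, hi⟩ := hx k hk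
  · exact ⟨T.pos_of_mem hi, T.le_one_of_mem hi⟩
  · exact (hρda i).trans (T.da_le_deriv hi)
  · exact fun hlt => hνΛ.trans (T.le_deriv_of_lt hslow hi hlt)
  · rw [Function.iterate_succ_apply']
    exact T.min_mul_rpow_le_deriv hslow (by positivity) hρ.le hρda hσ₀.le hσ₁ hi

end PCT

/-- Theorem 2.1.10. Let `τ ∈ 𝒯`. Then there is `n₀ ∈ ℕ` such that for
all `n ≥ n₀` the derivative of `τⁿ` on every branch interval of `𝒫⁽ⁿ⁾` is at least `2`,
i.e. `inf (τⁿ)' ≥ 2`. -/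
theorem iterate_expanding (T : PCT) :
    ∃ n₀ : ℕ, ∀ n ≥ n₀, ∀ c d : ℝ, IsBranchInterval T n c d →
      ∀ x ∈ Set.Ioo c d, 2 ≤ deriv (T.τ^[n]) x := by
  obtain ⟨C, ν, hC, hν, hexpand⟩ := T.exists_const_mul_pow_le_deriv_iterate
  obtain ⟨N, hN⟩ := pow_unbounded_of_one_lt (2 / C) hν
  refine ⟨N, fun n hn c d hcd x hx => ?_⟩
  calc (2 : ℝ) ≤ C * ν ^ N := ((div_lt_iff₀' hC).mp hN).le
    _ ≤ C * ν ^ n := by gcongr; exact hν.le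
    _ ≤ deriv T.τ^[n] x :=
      hexpand n x fun k hk => (hcd.1.2 k hk).imp fun _ hi => hi (mem_image_of_mem _ hx)
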